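/- (Paper's Corollary 1: one-step decrease of the finite-horizon value function under the controllability bound.) Let N ≥ 2 and x̄ ∈ ℝⁿ. Suppose (z*,v*) is admissible for horizon N from x̄ and attains V_N(x̄), i.e. ∑_{τ=0}^{N−1} ℓ(z*_τ,v*_τ) ≤ ∑_{τ=0}^{N−1} ℓ(z_τ,v_τ) for every admissible (z,v), with value V_N(x̄) = ∑_{τ=0}^{N−1} ℓ(z*_τ,v*_τ). Assume v*_{N−1} = 0, Az*_{N−1} ∈ 𝒳, and let κ ≥ 0 be such that κQ − AᵀQA is positive semidefinite, and Φ ≥ 0 be such that ℓ*(z*_{N−1}) ≤ Φ·ℓ(x̄, v*₀). Then for every real α ≤ 1 − κΦ, V_N(x̄) ≥ V_N(Ax̄ + Bv*₀) + α·ℓ(x̄, v*₀). -/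

import Mathlib

open Matrix Finset

/-- The stage cost `ℓ(x,u) = ½(xᵀQx + uᵀRu)`. -/
noncomputable def stageCost {n m : ℕ} (Q : Matrix (Fin n) (Fin n) ℝ)
    (R : Matrix (Fin m) (Fin m) ℝ) (x : Fin n → ℝ) (u : Fin m → ℝ) : ℝ :=
  (1/2) * (x ⬝ᵥ Q *ᵥ x + u ⬝ᵥ R *ᵥ u)

/-- `ℓ*(x) = ½xᵀQx`, the minimal stage cost for fixed state `x`. -/
noncomputable def minStageCost {n : ℕ} (Q : Matrix (Fin n) (Fin n) ℝ)
    (x : Fin n → ℝ) : ℝ := (1/2) * (x ⬝ᵥ Q *ᵥ x)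

/-- `(z,v)` is admissible for horizon `N` from `x̄`: `z₀ = x̄`, the dynamics
`z_{τ+1} = Az_τ + Bv_τ` hold for `τ = 0,…,N−2`, `z_τ ∈ 𝒳` and `v_τ ∈ 𝒰` for
`τ = 0,…,N−1`. -/
def Admissible {n m : ℕ} (A : Matrix (Fin n) (Fin n) ℝ) (B : Matrix (Fin n) (Fin m) ℝ)
    (X : Set (Fin n → ℝ)) (U : Set (Fin m → ℝ)) (N : ℕ) (xbar : Fin n → ℝ)
    (z : ℕ → Fin n → ℝ) (v : ℕ → Fin m → ℝ) : Prop :=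
  z 0 = xbar ∧ (∀ τ, τ + 1 < N → z (τ + 1) = A *ᵥ z τ + B *ᵥ v τ) ∧
    (∀ τ < N, z τ ∈ X) ∧ (∀ τ < N, v τ ∈ U)

/-- The finite-horizon optimal value function
`V_N(x̄) = inf {∑_{τ<N} ℓ(z_τ,v_τ) : (z,v) admissible for horizon N from x̄}`. -/
noncomputable def valueFn {n m : ℕ} (A : Matrix (Fin n) (Fin n) ℝ)
    (B : Matrix (Fin n) (Fin m) ℝ) (Q : Matrix (Fin n) (Fin n) ℝ)
    (R : Matrix (Fin m) (Fin m) ℝ) (X : Set (Fin n → ℝ)) (U : Set (Fin m → ℝ))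
    (N : ℕ) (xbar : Fin n → ℝ) : ℝ :=
  sInf {r : ℝ | ∃ (z : ℕ → Fin n → ℝ) (v : ℕ → Fin m → ℝ),
    Admissible A B X U N xbar z v ∧ r = ∑ τ ∈ range N, stageCost Q R (z τ) (v τ)}

/-! The optimal trajectory from `x̄`, shifted by one step and extended by the zero control, is
admissible from `A x̄ + B v*₀`. Its cost is `V_N(x̄) − ℓ(x̄, v*₀) + ℓ*(A z*_{N−1})`, and
`κQ ⪰ AᵀQA` bounds the last term by `κ ℓ*(z*_{N−1}) ≤ κΦ ℓ(x̄, v*₀)`. -/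

section

variable {n m : ℕ} {A : Matrix (Fin n) (Fin n) ℝ} {B : Matrix (Fin n) (Fin m) ℝ}
  {Q : Matrix (Fin n) (Fin n) ℝ} {R : Matrix (Fin m) (Fin m) ℝ}
  {X : Set (Fin n → ℝ)} {U : Set (Fin m → ℝ)} {N : ℕ}

lemma stageCost_nonneg (hQ : Q.PosSemidef) (hR : R.PosSemidef) (x : Fin n → ℝ)
    (u : Fin m → ℝ) : 0 ≤ stageCost Q R x u := by
  have hx := hQ.dotProduct_mulVec_nonneg x
  have hu := hR.dotProduct_mulVec_nonneg u
  simp only [star_trivial] at hx hu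
  unfold stageCost
  positivity

lemma stageCost_zero_right (x : Fin n → ℝ) :
    stageCost Q R x 0 = minStageCost Q x := by
  simp [stageCost, minStageCost]

lemma minStageCost_mulVec_le {κ : ℝ} (hκ : (κ • Q - Aᵀ * Q * A).PosSemidef)
    (x : Fin n → ℝ) : minStageCost Q (A *ᵥ x) ≤ κ * minStageCost Q x := by
  have hquad := hκ.dotProduct_mulVec_nonneg x
  simp only [star_trivial, sub_mulVec, smul_mulVec, dotProduct_sub, dotProduct_smul,
    smul_eq_mul, sub_nonneg] at hquad
  have hpull : A *ᵥ x ⬝ᵥ Q *ᵥ (A *ᵥ x) = x ⬝ᵥ (Aᵀ * Q * A) *ᵥ x := by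
    rw [dotProduct_mulVec, dotProduct_mulVec, dotProduct_mulVec, ← vecMul_vecMul,
      ← vecMul_vecMul, vecMul_transpose]
  unfold minStageCost
  rw [hpull]
  linarith

lemma valueFn_le_of_admissible (hQ : Q.PosSemidef) (hR : R.PosSemidef)
    {xbar : Fin n → ℝ} {z : ℕ → Fin n → ℝ} {v : ℕ → Fin m → ℝ}
    (h : Admissible A B X U N xbar z v) :
    valueFn A B Q R X U N xbar ≤ ∑ τ ∈ range N, stageCost Q R (z τ) (v τ) := by
  refine csInf_le ⟨0, ?_⟩ ⟨z, v, h, rfl⟩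
  rintro _ ⟨z', v', -, rfl⟩
  exact sum_nonneg fun τ _ => stageCost_nonneg hQ hR _ _

-- `(z, v)` shifted by one step and extended by the zero control: the candidate from `A x̄ + B v₀`.
def shiftState (A : Matrix (Fin n) (Fin n) ℝ) (N : ℕ) (z : ℕ → Fin n → ℝ) :
    ℕ → Fin n → ℝ :=
  fun τ => if τ + 1 < N then z (τ + 1) else A *ᵥ z τ

def shiftControl (N : ℕ) (v : ℕ → Fin m → ℝ) : ℕ → Fin m → ℝ :=
  fun τ => if τ + 1 < N then v (τ + 1) else 0

lemma Admissible.shift {xbar : Fin n → ℝ} {z : ℕ → Fin n → ℝ} {v : ℕ → Fin m → ℝ}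
    (h : Admissible A B X U N xbar z v) (hN : 0 < N) (hvlast : v (N - 1) = 0)
    (hterm : A *ᵥ z (N - 1) ∈ X) (hU0 : (0 : Fin m → ℝ) ∈ U) :
    Admissible A B X U N (A *ᵥ xbar + B *ᵥ v 0) (shiftState A N z) (shiftControl N v) := by
  obtain ⟨hz0, hdyn, hzX, hvU⟩ := h
  refine ⟨?_, fun τ hτ => ?_, fun τ hτ => ?_, fun τ hτ => ?_⟩
  · rw [← hz0]
    by_cases h1 : 1 < N
    · simp [shiftState, h1, hdyn 0 h1]
    · obtain rfl : N = 1 := by omega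
      simp [shiftState, hvlast]
  · by_cases h2 : τ + 2 < N
    · simp [shiftState, shiftControl, h2, hτ, hdyn (τ + 1) h2]
    · rw [show N - 1 = τ + 1 by omega] at hvlast
      simp [shiftState, shiftControl, hτ, h2, hvlast]
  · by_cases h1 : τ + 1 < N
    · simpa [shiftState, h1] using hzX (τ + 1) h1
    · obtain rfl : τ = N - 1 := by omega
      simpa [shiftState, h1] using hterm
  · by_cases h1 : τ + 1 < N
    · simpa [shiftControl, h1] using hvU (τ + 1) h1
    · simpa [shiftControl, h1] using hU0

lemma sum_stageCost_shift (hN : 0 < N) (z : ℕ → Fin n → ℝ) (v : ℕ → Fin m → ℝ) :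
    ∑ τ ∈ range N, stageCost Q R (shiftState A N z τ) (shiftControl N v τ) +
        stageCost Q R (z 0) (v 0) =
      ∑ τ ∈ range N, stageCost Q R (z τ) (v τ) + stageCost Q R (A *ᵥ z (N - 1)) 0 := by
  obtain ⟨M, rfl⟩ : ∃ M, N = M + 1 := ⟨N - 1, by omega⟩
  have hinit : ∀ τ ∈ range M, stageCost Q R (shiftState A (M + 1) z τ)
      (shiftControl (M + 1) v τ) = stageCost Q R (z (τ + 1)) (v (τ + 1)) := by
    intro τ hτ
    have : τ + 1 < M + 1 := by simpa using hτ
    simp [shiftState, shiftControl, this]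
  rw [sum_range_succ, sum_range_succ', sum_congr rfl hinit]
  simp only [shiftState, shiftControl, lt_self_iff_false, ↓reduceIte, add_tsub_cancel_right]
  ring

end

theorem one_step_value_decrease_general {n m : ℕ}
    (N : ℕ) (hN : 2 ≤ N)
    (A : Matrix (Fin n) (Fin n) ℝ) (B : Matrix (Fin n) (Fin m) ℝ)
    (Q : Matrix (Fin n) (Fin n) ℝ) (hQ : Q.PosDef)
    (R : Matrix (Fin m) (Fin m) ℝ) (hR : R.PosDef)
    (X : Set (Fin n → ℝ)) (U : Set (Fin m → ℝ)) (hU0 : (0 : Fin m → ℝ) ∈ U)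
    (xbar : Fin n → ℝ)
    (zstar : ℕ → Fin n → ℝ) (vstar : ℕ → Fin m → ℝ)
    (hadm : Admissible A B X U N xbar zstar vstar)
    (hval : valueFn A B Q R X U N xbar = ∑ τ ∈ range N, stageCost Q R (zstar τ) (vstar τ))
    (hvlast : vstar (N - 1) = 0)
    (hterm : A *ᵥ zstar (N - 1) ∈ X)
    (κ : ℝ) (hκ0 : 0 ≤ κ) (hκ : (κ • Q - Aᵀ * Q * A).PosSemidef)
    (Φ : ℝ)
    (hΦ : minStageCost Q (zstar (N - 1)) ≤ Φ * stageCost Q R xbar (vstar 0)) :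
    ∀ α : ℝ, α ≤ 1 - κ * Φ →
      valueFn A B Q R X U N xbar ≥
        valueFn A B Q R X U N (A *ᵥ xbar + B *ᵥ vstar 0) +
          α * stageCost Q R xbar (vstar 0) := by
  intro α hα
  have hNpos : 0 < N := by omega
  have hshift := valueFn_le_of_admissible hQ.posSemidef hR.posSemidef
    (hadm.shift hNpos hvlast hterm hU0)
  have hcost := sum_stageCost_shift (Q := Q) (R := R) (A := A) hNpos zstar vstar
  rw [hadm.1] at hcost
  have hterminal : stageCost Q R (A *ᵥ zstar (N - 1)) 0 ≤
      κ * Φ * stageCost Q R xbar (vstar 0) := by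
    rw [stageCost_zero_right, mul_assoc]
    exact (minStageCost_mulVec_le hκ _).trans (mul_le_mul_of_nonneg_left hΦ hκ0)
  have hℓ := stageCost_nonneg hQ.posSemidef hR.posSemidef xbar (vstar 0)
  rw [hval]
  nlinarith [mul_le_mul_of_nonneg_right hα hℓ]

/-- Paper's Corollary 1: one-step decrease of the finite-horizon value function
under the controllability bound: if `(z*,v*)` attains `V_N(x̄)`, `v*_{N−1} = 0`,
`Az*_{N−1} ∈ 𝒳`, `κQ − AᵀQA ⪰ 0` and `ℓ*(z*_{N−1}) ≤ Φ·ℓ(x̄,v*₀)`, then for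
every `α ≤ 1 − κΦ`, `V_N(x̄) ≥ V_N(Ax̄ + Bv*₀) + α·ℓ(x̄,v*₀)`. -/
theorem one_step_value_decrease {n m : ℕ} (hn : 1 ≤ n) (hm : 1 ≤ m)
    (N : ℕ) (hN : 2 ≤ N)
    (A : Matrix (Fin n) (Fin n) ℝ) (B : Matrix (Fin n) (Fin m) ℝ)
    (Q : Matrix (Fin n) (Fin n) ℝ) (hQ : Q.PosDef)
    (R : Matrix (Fin m) (Fin m) ℝ) (hR : R.PosDef)
    (X : Set (Fin n → ℝ)) (U : Set (Fin m → ℝ)) (hU0 : (0 : Fin m → ℝ) ∈ U)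
    (xbar : Fin n → ℝ)
    (zstar : ℕ → Fin n → ℝ) (vstar : ℕ → Fin m → ℝ)
    (hadm : Admissible A B X U N xbar zstar vstar)
    (hopt : ∀ (z : ℕ → Fin n → ℝ) (v : ℕ → Fin m → ℝ), Admissible A B X U N xbar z v →
      ∑ τ ∈ range N, stageCost Q R (zstar τ) (vstar τ) ≤
        ∑ τ ∈ range N, stageCost Q R (z τ) (v τ))
    (hval : valueFn A B Q R X U N xbar = ∑ τ ∈ range N, stageCost Q R (zstar τ) (vstar τ))
    (hvlast : vstar (N - 1) = 0)
    (hterm : A *ᵥ zstar (N - 1) ∈ X)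
    (κ : ℝ) (hκ0 : 0 ≤ κ) (hκ : (κ • Q - Aᵀ * Q * A).PosSemidef)
    (Φ : ℝ) (hΦ0 : 0 ≤ Φ)
    (hΦ : minStageCost Q (zstar (N - 1)) ≤ Φ * stageCost Q R xbar (vstar 0)) :
    ∀ α : ℝ, α ≤ 1 - κ * Φ →
      valueFn A B Q R X U N xbar ≥
        valueFn A B Q R X U N (A *ᵥ xbar + B *ᵥ vstar 0) +
          α * stageCost Q R xbar (vstar 0) :=
  one_step_value_decrease_general N hN A B Q hQ R hR X U hU0 xbar zstar vstar hadm hval hvlast hterm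
    κ hκ0 hκ Φ hΦ
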